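/- The kernel of the ℂ-algebra homomorphism from the polynomial ring ℂ[s,t,u,v] to ℂ[X,Y,Z] determined by s ↦ X², t ↦ XY, u ↦ Y², v ↦ Z is the ideal generated by the single element su − t². -/

import Mathlib

noncomputable section
open MvPolynomial

/-- The ℂ-algebra homomorphism `ℂ[s,t,u,v] → ℂ[X,Y,Z]` determined by
`s ↦ X², t ↦ XY, u ↦ Y², v ↦ Z`.  Variables: `s = X 0, t = X 1, u = X 2, v = X 3`
on the source and `X = X 0, Y = X 1, Z = X 2` on the target. -/
def wps112Presentation : MvPolynomial (Fin 4) ℂ →ₐ[ℂ] MvPolynomial (Fin 3) ℂ :=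
  aeval ![X 0 ^ 2, X 0 * X 1, X 1 ^ 2, X 2]

namespace Wps112Aux

/-- The doubling map on exponents corresponding to `s ↦ X², u ↦ Y², v ↦ Z`. -/
def D (d : Fin 3 →₀ ℕ) : Fin 3 →₀ ℕ :=
  Finsupp.single 0 (2 * d 0) + Finsupp.single 1 (2 * d 1) + Finsupp.single 2 (d 2)

lemma D_apply0 (d : Fin 3 →₀ ℕ) : D d 0 = 2 * d 0 := by
  simp [D, Finsupp.single_apply]

lemma D_apply1 (d : Fin 3 →₀ ℕ) : D d 1 = 2 * d 1 := by
  simp [D, Finsupp.single_apply]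

lemma D_apply2 (d : Fin 3 →₀ ℕ) : D d 2 = d 2 := by
  simp [D, Finsupp.single_apply]

lemma D_inj : Function.Injective D := by
  intro d d' h
  have h0 := congrArg (fun g => g 0) h
  have h1 := congrArg (fun g => g 1) h
  have h2 := congrArg (fun g => g 2) h
  simp only [D_apply0, D_apply1, D_apply2] at h0 h1 h2
  ext i
  fin_cases i
  · show d 0 = d' 0; omega
  · show d 1 = d' 1; omega
  · show d 2 = d' 2; omega

/-- The map `ℂ[s,u,v] → ℂ[X,Y,Z]`, `s ↦ X², u ↦ Y², v ↦ Z`. -/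
def ψ : MvPolynomial (Fin 3) ℂ →ₐ[ℂ] MvPolynomial (Fin 3) ℂ :=
  aeval ![X 0 ^ 2, X 1 ^ 2, X 2]

lemma ψ_monomial (d : Fin 3 →₀ ℕ) (c : ℂ) : ψ (monomial d c) = monomial (D d) c := by
  rw [ψ, aeval_monomial, monomial_eq, algebraMap_eq]
  rw [Finsupp.prod_fintype _ _ (fun i => pow_zero _),
      Finsupp.prod_fintype _ _ (fun i => pow_zero _)]
  rw [Fin.prod_univ_three, Fin.prod_univ_three]
  simp only [D_apply0, D_apply1, D_apply2, Matrix.cons_val_zero, Matrix.cons_val_one,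
    Matrix.head_cons, Matrix.cons_val_two, Matrix.tail_cons]
  rw [pow_mul, pow_mul]

lemma coeff_ψ (f : MvPolynomial (Fin 3) ℂ) (d : Fin 3 →₀ ℕ) :
    coeff (D d) (ψ f) = coeff d f := by
  induction f using MvPolynomial.induction_on' with
  | monomial d' c =>
    rw [ψ_monomial, coeff_monomial, coeff_monomial]
    exact if_congr ⟨fun h => D_inj h, fun h => by rw [h]⟩ rfl rfl
  | add p q hp hq => rw [map_add, coeff_add, coeff_add, hp, hq]

lemma ψ_inj : Function.Injective ψ := by
  intro a b h
  ext d
  rw [← coeff_ψ a d, ← coeff_ψ b d, h]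

end Wps112Aux

/-- The kernel of the ℂ-algebra homomorphism
`ℂ[s,t,u,v] → ℂ[X,Y,Z]`, `s ↦ X², t ↦ XY, u ↦ Y², v ↦ Z` is the ideal
generated by the single element `su − t²`. -/
theorem ker_wps112_presentation :
    RingHom.ker wps112Presentation.toRingHom
      = Ideal.span ({X 0 * X 2 - X 1 ^ 2} : Set (MvPolynomial (Fin 4) ℂ)) := by
  open Wps112Aux in
  apply le_antisymm
  · intro f hf
    have hf0 : wps112Presentation f = 0 := by
      rwa [RingHom.mem_ker, AlgHom.toRingHom_eq_coe, RingHom.coe_coe] at hf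
    -- the coefficient-inclusion `ℂ[s,u,v] → ℂ[s,t,u,v]`
    set ι : MvPolynomial (Fin 3) ℂ →ₐ[ℂ] MvPolynomial (Fin 4) ℂ :=
      aeval ![X 0, X 2, X 3] with hι
    -- `E` views `ℂ[s,t,u,v]` as polynomials in `t`; `B` is the inverse substitution
    set E : MvPolynomial (Fin 4) ℂ →ₐ[ℂ] Polynomial (MvPolynomial (Fin 3) ℂ) :=
      aeval ![Polynomial.C (X 0), Polynomial.X, Polynomial.C (X 1), Polynomial.C (X 2)] with hE
    set B : Polynomial (MvPolynomial (Fin 3) ℂ) →ₐ[ℂ] MvPolynomial (Fin 4) ℂ :=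
      Polynomial.aevalTower ι (X 1) with hB
    have hBE : ∀ g, B (E g) = g := by
      have : B.comp E = AlgHom.id ℂ _ := by
        apply MvPolynomial.algHom_ext
        intro i
        fin_cases i <;>
          simp [hE, hB, hι]
      intro g
      exact AlgHom.congr_fun this g
    set p : Polynomial (MvPolynomial (Fin 3) ℂ) :=
      Polynomial.X ^ 2 - Polynomial.C (X 0 * X 1) with hpdef
    have hp : p.Monic := Polynomial.monic_X_pow_sub_C _ two_ne_zero
    have hpne : p ≠ 1 := by
      intro h
      have := congrArg Polynomial.natDegree h
      rw [hpdef, Polynomial.natDegree_X_pow_sub_C, Polynomial.natDegree_one] at this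
      omega
    have hdeg : (E f %ₘ p).natDegree ≤ 1 := by
      have hlt := Polynomial.natDegree_modByMonic_lt (E f) hp hpne
      have hnd : p.natDegree = 2 := by rw [hpdef, Polynomial.natDegree_X_pow_sub_C]
      rw [hnd] at hlt
      omega
    set c0 := (E f %ₘ p).coeff 0 with hc0def
    set c1 := (E f %ₘ p).coeff 1 with hc1def
    have hr : E f %ₘ p = Polynomial.C c1 * Polynomial.X + Polynomial.C c0 :=
      Polynomial.eq_X_add_C_of_natDegree_le_one hdeg
    have hBp : B p = X 1 ^ 2 - X 0 * X 2 := by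
      rw [hpdef, map_sub, map_pow]
      rw [hB, Polynomial.aevalTower_X, Polynomial.aevalTower_C]
      have : ι (X 0 * X 1) = X 0 * X 2 := by simp [hι]
      rw [this]
    have hBr : B (E f %ₘ p) = ι c1 * X 1 + ι c0 := by
      rw [hr, map_add, map_mul, hB, Polynomial.aevalTower_X, Polynomial.aevalTower_C,
        Polynomial.aevalTower_C]
    have hfeq : f = ι c1 * X 1 + ι c0 + (X 1 ^ 2 - X 0 * X 2) * B (E f /ₘ p) := by
      conv_lhs => rw [← hBE f, ← Polynomial.modByMonic_add_div (E f) p]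
      rw [map_add, map_mul, hBp, hBr]
    have hcomp : ∀ a, wps112Presentation (ι a) = ψ a := by
      have : wps112Presentation.comp ι = ψ := by
        apply MvPolynomial.algHom_ext
        intro i
        fin_cases i <;> simp [wps112Presentation, hι, ψ]
      exact fun a => AlgHom.congr_fun this a
    have key : ψ c1 * (X 0 * X 1) + ψ c0 = 0 := by
      have hφp : wps112Presentation (X 1 ^ 2 - X 0 * X 2) = 0 := by
        simp [wps112Presentation]
        ring
      have hX1 : wps112Presentation (X 1) = X 0 * X 1 := by
        simp [wps112Presentation]
      have := congrArg wps112Presentation hfeq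
      rw [hf0, map_add, map_add, map_mul, map_mul, hφp, zero_mul, add_zero,
        hcomp, hcomp, hX1] at this
      exact this.symm
    set τ : MvPolynomial (Fin 3) ℂ →ₐ[ℂ] MvPolynomial (Fin 3) ℂ :=
      aeval ![-X 0, X 1, X 2] with hτ
    have hτψ : ∀ a, τ (ψ a) = ψ a := by
      have : τ.comp ψ = ψ := by
        apply MvPolynomial.algHom_ext
        intro i
        fin_cases i <;> simp [hτ, ψ, neg_pow]
      exact fun a => AlgHom.congr_fun this a
    have key2 : ψ c1 * (-(X 0 * X 1)) + ψ c0 = 0 := by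
      have := congrArg τ key
      rw [map_add, map_mul, map_zero, hτψ, hτψ, map_mul] at this
      have hτ0 : τ (X 0) = -X 0 := by simp [hτ]
      have hτ1 : τ (X 1) = X 1 := by simp [hτ]
      rw [hτ0, hτ1] at this
      rw [← this]
      ring
    have hc1 : ψ c1 = 0 := by
      have h2 : ψ c1 * (2 * (X 0 * X 1)) = 0 := by linear_combination key - key2
      rcases mul_eq_zero.mp h2 with h | h
      · exact h
      · exact absurd h (mul_ne_zero two_ne_zero
          (mul_ne_zero (MvPolynomial.X_ne_zero _) (MvPolynomial.X_ne_zero _)))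
    have hc0 : ψ c0 = 0 := by
      have := key
      rw [hc1, zero_mul, zero_add] at this
      exact this
    have hc1' : c1 = 0 := ψ_inj (hc1.trans (map_zero ψ).symm)
    have hc0' : c0 = 0 := ψ_inj (hc0.trans (map_zero ψ).symm)
    rw [Ideal.mem_span_singleton]
    refine ⟨-(B (E f /ₘ p)), ?_⟩
    conv_lhs => rw [hfeq, hc0', hc1']
    rw [map_zero]
    ring
  · rw [Ideal.span_le, Set.singleton_subset_iff, SetLike.mem_coe, RingHom.mem_ker]
    have : wps112Presentation (X 0 * X 2 - X 1 ^ 2) = 0 := by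
      simp [wps112Presentation]
      ring
    simpa using this

end
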